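/- Let k ∈ ℕ, r > 0, c ∈ ℝ², and let S ⊆ {x ∈ ℝ² : ‖x − c‖₁ = r and x₂ ≥ c₂} be contained in the closed upper ℓ1-semicircle of radius r centered at c (the union of two adjacent sides of an ℓ1-circle, sharing the vertex c + (0, r)). If S determines at most k distinct ℓ1-distances, then |S| ≤ 2k + 1. Furthermore, if |S| = 2k + 1, then S consists of k + 1 points on each of the two sides, the points on each side forming an arithmetic progression, with the two progressions meeting at the shared vertex c + (0, r). -/
import Mathlib


noncomputable def l1 {d : ℕ} (x : Fin d → ℝ) : ℝ := ∑ i, |x i|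

def distSet {d : ℕ} (P : Set (Fin d → ℝ)) : Set ℝ :=
  {r | ∃ p ∈ P, ∃ q ∈ P, p ≠ q ∧ l1 (p - q) = r}

def DeterminesAtMost {d : ℕ} (k : ℕ) (P : Set (Fin d → ℝ)) : Prop :=
  (distSet P).encard ≤ (k : ℕ∞)

open Finset


lemma ap_of_few_diffs (n : ℕ) (hn : 2 ≤ n) (A D : Finset ℝ) (hA : A.card = n)
    (hD : D.card ≤ n - 1)
    (hdiff : ∀ a ∈ A, ∀ b ∈ A, a < b → b - a ∈ D) :
    ∃ a0 δ : ℝ, 0 < δ ∧ ∀ x, x ∈ A ↔ ∃ j : ℕ, j < n ∧ x = a0 + j * δ := by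
  have h0 : (0:ℕ) < n := by omega
  set a : Fin n → ℝ := fun i => A.orderEmbOfFin hA i with ha
  have hmono : StrictMono a := (A.orderEmbOfFin hA).strictMono
  have hmem : ∀ i, a i ∈ A := fun i => A.orderEmbOfFin_mem hA i
  set z : Fin n := ⟨0, h0⟩ with hz
  set e := a ⟨1, hn⟩ - a z with he
  have hepos : 0 < e := by
    have := hmono (show z < ⟨1, hn⟩ by simp [hz, Fin.lt_def])
    simp [he]; linarith
  have hzlt : ∀ i : Fin n, i ≠ z → z < i := by
    intro i hi
    have : i.val ≠ 0 := fun hv => hi (Fin.ext hv)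
    simp only [hz, Fin.lt_def]; omega
  -- the difference set is exactly the diffs from the minimum
  set F : Finset ℝ := (Finset.univ.erase z).image (fun i => a i - a z) with hF
  have hFD : F ⊆ D := by
    intro d hd
    simp only [hF, mem_image, mem_erase] at hd
    obtain ⟨i, ⟨hiz, -⟩, rfl⟩ := hd
    exact hdiff _ (hmem z) _ (hmem i) (hmono (hzlt i hiz))
  have hFcard : F.card = n - 1 := by
    rw [hF, card_image_of_injOn, card_erase_of_mem (mem_univ z), card_univ, Fintype.card_fin]
    intro i _ j _ hij
    dsimp at hij
    exact hmono.injective (by linarith)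
  have hDF : D = F := (eq_of_subset_of_card_le hFD (by omega)).symm
  have hDrep : ∀ d ∈ D, ∃ i : Fin n, i ≠ z ∧ d = a i - a z := by
    intro d hd
    rw [hDF, hF] at hd
    simp only [mem_image, mem_erase] at hd
    obtain ⟨i, ⟨hiz, -⟩, rfl⟩ := hd
    exact ⟨i, hiz, rfl⟩
  -- main claim
  have key : ∀ m : ℕ, ∀ hm : m < n, a ⟨m, hm⟩ = a z + m * e := by
    intro m
    induction m using Nat.strong_induction_on with
    | _ m IH =>
      intro hm
      match m, hm with
      | 0, hm => show a z = a z + (0:ℕ) * e; push_cast; ring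
      | 1, hm =>
        show a ⟨1, hn⟩ = a z + ((1:ℕ):ℝ) * e
        rw [he]; push_cast; ring
      | (t+2), hm =>
        have ht1 : t + 1 < n := by omega
        have ht : t < n := by omega
        have h1t2 : (⟨1, hn⟩ : Fin n) < ⟨t+2, hm⟩ := by simp [Fin.lt_def]
        have hd : a ⟨t+2, hm⟩ - a ⟨1, hn⟩ ∈ D :=
          hdiff _ (hmem _) _ (hmem _) (hmono h1t2)
        obtain ⟨s, hsz, hs⟩ := hDrep _ hd
        have IH1 := IH (t+1) (by omega) ht1
        have IH0 := IH t (by omega) ht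
        push_cast at IH1 IH0
        -- lower bound : a s > a ⟨t, ht⟩
        have hlow : a ⟨t, ht⟩ < a s := by
          have h1 : a ⟨t+1, ht1⟩ < a ⟨t+2, hm⟩ := hmono (by simp [Fin.lt_def])
          have : a s - a z = a ⟨t+2, hm⟩ - a ⟨1, hn⟩ := hs.symm
          have he1 : a ⟨1, hn⟩ = a z + e := by rw [he]; ring
          nlinarith [this, he1, IH1, IH0]
        have hup : a s < a ⟨t+2, hm⟩ := by
          have hzs : a z < a s := hmono (hzlt s hsz)
          have h1z : a z < a ⟨1, hn⟩ := hmono (by simp [hz, Fin.lt_def])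
          linarith [hs]
        have hsval : s = ⟨t+1, ht1⟩ := by
          have l1 : t < s.val := hmono.lt_iff_lt.mp hlow
          have l2 : s.val < t + 2 := hmono.lt_iff_lt.mp hup
          have hv : s.val = t + 1 := by omega
          exact Fin.ext (by simp [hv])
        rw [hsval] at hs
        have he1 : a ⟨1, hn⟩ = a z + e := by rw [he]; ring
        have : a ⟨t+2, hm⟩ = a ⟨1, hn⟩ + (a ⟨t+1, ht1⟩ - a z) := by linarith [hs]
        rw [this, he1, IH1]
        push_cast
        ring
  refine ⟨a z, e, hepos, fun x => ⟨?_, ?_⟩⟩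
  · intro hx
    have : x ∈ Set.range a := by
      rw [ha]
      show x ∈ Set.range (A.orderEmbOfFin hA)
      rw [Finset.range_orderEmbOfFin]
      exact hx
    obtain ⟨i, rfl⟩ := this
    exact ⟨i.val, i.isLt, by rw [← key i.val i.isLt]⟩
  · rintro ⟨j, hj, rfl⟩
    rw [← key j hj]
    exact hmem _


lemma count_side (A B D : Finset ℝ) (hAne : A.Nonempty)
    (hA : ∀ a ∈ A, (0:ℝ) ≤ a) (hB : ∀ b ∈ B, (0:ℝ) ≤ b)
    (hAA : ∀ a ∈ A, ∀ a' ∈ A, a < a' → 2*(a' - a) ∈ D)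
    (hAB : ∀ a ∈ A, ∀ b ∈ B, 0 < a + b → 2 * max a b ∈ D) :
    A.card + (B.filter (fun b => A.max' hAne < b)).card
      + (if ((0:ℝ) ∉ A ∧ 0 < A.max' hAne ∧ ∃ b ∈ B, b ≤ A.max' hAne) then 1 else 0)
      ≤ D.card + 1 := by
  classical
  set M := A.max' hAne with hM
  have hMA : M ∈ A := A.max'_mem hAne
  have hM0 : 0 ≤ M := hA M hMA
  set F1 : Finset ℝ := (A.erase M).image (fun x => 2*(M - x)) with hF1
  set F2 : Finset ℝ := (B.filter (fun b => M < b)).image (fun b => 2*b) with hF2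
  set F3 : Finset ℝ := if ((0:ℝ) ∉ A ∧ 0 < M ∧ ∃ b ∈ B, b ≤ M) then {2*M} else ∅ with hF3
  -- memberships
  have hF1D : F1 ⊆ D := by
    intro d hd
    simp only [hF1, mem_image, mem_erase] at hd
    obtain ⟨x, ⟨hxM, hxA⟩, rfl⟩ := hd
    exact hAA x hxA M hMA (lt_of_le_of_ne (A.le_max' x hxA) hxM)
  have hF2D : F2 ⊆ D := by
    intro d hd
    simp only [hF2, mem_image, mem_filter] at hd
    obtain ⟨b, ⟨hbB, hMb⟩, rfl⟩ := hd
    have := hAB M hMA b hbB (by linarith)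
    rwa [max_eq_right hMb.le] at this
  have hF3D : F3 ⊆ D := by
    intro d hd
    rw [hF3] at hd
    split_ifs at hd with hc
    · obtain ⟨h0A, hMpos, b, hbB, hbM⟩ := hc
      simp only [mem_singleton] at hd
      subst hd
      have := hAB M hMA b hbB (by have := hB b hbB; linarith)
      rwa [max_eq_left hbM] at this
    · simp at hd
  -- bounds on values
  have hF1le : ∀ d ∈ F1, d ≤ 2*M := by
    intro d hd
    simp only [hF1, mem_image, mem_erase] at hd
    obtain ⟨x, ⟨hxM, hxA⟩, rfl⟩ := hd
    have := hA x hxA; linarith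
  have hF2gt : ∀ d ∈ F2, 2*M < d := by
    intro d hd
    simp only [hF2, mem_image, mem_filter] at hd
    obtain ⟨b, ⟨hbB, hMb⟩, rfl⟩ := hd
    linarith
  have hd12 : Disjoint F1 F2 := by
    rw [Finset.disjoint_left]
    intro d h1 h2
    exact absurd (hF1le d h1) (not_le.mpr (hF2gt d h2))
  have hd13 : Disjoint (F1 ∪ F2) F3 := by
    rw [Finset.disjoint_left]
    intro d h12 h3
    rw [hF3] at h3
    split_ifs at h3 with hc
    · simp only [mem_singleton] at h3
      subst h3
      rcases mem_union.mp h12 with h1 | h2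
      · simp only [hF1, mem_image, mem_erase] at h1
        obtain ⟨x, ⟨hxM, hxA⟩, hx⟩ := h1
        have : x = 0 := by linarith
        exact hc.1 (this ▸ hxA)
      · exact absurd (hF2gt _ h2) (by linarith)
    · simp at h3
  -- cards
  have hc1 : F1.card = A.card - 1 := by
    rw [hF1, card_image_of_injOn (fun x _ y _ h => by linarith [h]),
      card_erase_of_mem hMA]
  have hc2 : F2.card = (B.filter (fun b => M < b)).card := by
    rw [hF2, card_image_of_injOn (fun x _ y _ h => by linarith [h])]
  have hc3 : F3.card = (if ((0:ℝ) ∉ A ∧ 0 < M ∧ ∃ b ∈ B, b ≤ M) then 1 else 0) := by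
    rw [hF3]; split_ifs <;> simp
  have hsub : F1 ∪ F2 ∪ F3 ⊆ D := by
    intro d hd
    rcases mem_union.mp hd with h | h
    · rcases mem_union.mp h with h | h
      · exact hF1D h
      · exact hF2D h
    · exact hF3D h
  have hcard : F1.card + F2.card + F3.card ≤ D.card := by
    calc F1.card + F2.card + F3.card
        = (F1 ∪ F2).card + F3.card := by rw [card_union_of_disjoint hd12]
      _ = (F1 ∪ F2 ∪ F3).card := (card_union_of_disjoint hd13).symm
      _ ≤ D.card := card_le_card hsub
  have hA1 : 1 ≤ A.card := card_pos.mpr hAne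
  omega

-- given cards = k+1, extract the AP structure
lemma side_ap (k : ℕ) (hk : 1 ≤ k) (A D : Finset ℝ)
    (hA : ∀ a ∈ A, (0:ℝ) ≤ a) (hD : D.card ≤ k)
    (hAA : ∀ a ∈ A, ∀ a' ∈ A, a < a' → 2*(a' - a) ∈ D)
    (hcard : A.card = k + 1) (h0A : (0:ℝ) ∈ A) :
    ∃ δ : ℝ, 0 < δ ∧ ∀ x, x ∈ A ↔ ∃ j : ℕ, j ≤ k ∧ x = j * δ := by
  classical
  set D2 := D.image (fun d => d/2) with hD2
  have hdiff : ∀ a ∈ A, ∀ b ∈ A, a < b → b - a ∈ D2 := by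
    intro a ha b hb hab
    rw [hD2, mem_image]
    exact ⟨2*(b-a), hAA a ha b hb hab, by ring⟩
  have hD2card : D2.card ≤ (k+1) - 1 := le_trans (card_image_le) (by omega)
  obtain ⟨a0, δ, hδ, hchar⟩ := ap_of_few_diffs (k+1) (by omega) A D2 hcard hD2card hdiff
  have ha0A : a0 ∈ A := (hchar a0).mpr ⟨0, by omega, by push_cast; ring⟩
  have ha0 : a0 = 0 := by
    obtain ⟨j, hj, hj0⟩ := (hchar 0).mp h0A
    have := hA a0 ha0A
    nlinarith [Nat.cast_nonneg (α := ℝ) j]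
  refine ⟨δ, hδ, fun x => ?_⟩
  rw [hchar x, ha0]
  constructor
  · rintro ⟨j, hj, rfl⟩; exact ⟨j, by omega, by ring⟩
  · rintro ⟨j, hj, rfl⟩; exact ⟨j, by omega, by ring⟩

lemma core_aux (k : ℕ) (hk : 1 ≤ k) (A B D : Finset ℝ)
    (hA : ∀ a ∈ A, (0:ℝ) ≤ a) (hB : ∀ b ∈ B, (0:ℝ) ≤ b)
    (hD : D.card ≤ k)
    (hAA : ∀ a ∈ A, ∀ a' ∈ A, a < a' → 2*(a' - a) ∈ D)
    (hBB : ∀ b ∈ B, ∀ b' ∈ B, b < b' → 2*(b' - b) ∈ D)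
    (hAB : ∀ a ∈ A, ∀ b ∈ B, 0 < a + b → 2 * max a b ∈ D)
    (h0 : (0:ℝ) ∈ A ↔ (0:ℝ) ∈ B)
    (hMN : ∀ a ∈ A, ∃ b ∈ B, a ≤ b) :
    (A.card + B.card ≤ 2*k + 1 + (if (0:ℝ) ∈ A then 1 else 0)) ∧
    (2*k + 1 + (if (0:ℝ) ∈ A then 1 else 0) ≤ A.card + B.card →
      (0:ℝ) ∈ A ∧ (0:ℝ) ∈ B ∧ A.card = k + 1 ∧ B.card = k + 1 ∧
      (∃ δ : ℝ, 0 < δ ∧ ∀ x, x ∈ A ↔ ∃ j : ℕ, j ≤ k ∧ x = j * δ) ∧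
      (∃ δ : ℝ, 0 < δ ∧ ∀ x, x ∈ B ↔ ∃ j : ℕ, j ≤ k ∧ x = j * δ)) := by
  classical
  have hBA : ∀ b ∈ B, ∀ a ∈ A, 0 < b + a → 2 * max b a ∈ D := by
    intro b hb a ha hab
    rw [max_comm]
    exact hAB a ha b hb (by linarith)
  rcases A.eq_empty_or_nonempty with hAe | hAne
  · -- A empty
    have h0A : (0:ℝ) ∉ A := by simp [hAe]
    have hBcard : B.card ≤ k + 1 := by
      rcases B.eq_empty_or_nonempty with hBe | hBne
      · simp [hBe]
      · have := count_side B A D hBne hB hA hBB hBA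
        omega
    simp only [hAe, card_empty, if_neg h0A]
    constructor
    · omega
    · intro hle; omega
  · have hBne : B.Nonempty := by
      obtain ⟨a, ha⟩ := hAne
      obtain ⟨b, hb, -⟩ := hMN a ha
      exact ⟨b, hb⟩
    set M := A.max' hAne with hM
    set N := B.max' hBne with hN
    have hMN' : M ≤ N := by
      obtain ⟨b, hb, hab⟩ := hMN M (A.max'_mem hAne)
      exact le_trans hab (B.le_max' b hb)
    have I1 := count_side A B D hAne hA hB hAA hAB
    have I2 := count_side B A D hBne hB hA hBB hBA
    rw [← hM] at I1
    rw [← hN] at I2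
    by_cases h0A : (0:ℝ) ∈ A
    · have h0B : (0:ℝ) ∈ B := h0.mp h0A
      have hε : ¬((0:ℝ) ∉ A ∧ 0 < M ∧ ∃ b ∈ B, b ≤ M) := fun hc => hc.1 h0A
      have hε' : ¬((0:ℝ) ∉ B ∧ 0 < N ∧ ∃ a ∈ A, a ≤ N) := fun hc => hc.1 h0B
      rw [if_neg hε] at I1
      rw [if_neg hε'] at I2
      simp only [if_pos h0A]
      refine ⟨by omega, fun hle => ?_⟩
      have hAc : A.card = k + 1 := by omega
      have hBc : B.card = k + 1 := by omega
      exact ⟨h0A, h0B, hAc, hBc,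
        side_ap k hk A D hA hD hAA hAc h0A,
        side_ap k hk B D hB hD hBB hBc h0B⟩
    · have h0B : (0:ℝ) ∉ B := fun hb => h0A (h0.mpr hb)
      have hNpos : 0 < N := by
        have h1 : N ∈ B := B.max'_mem hBne
        have h2 := hB N h1
        rcases h2.lt_or_eq with h | h
        · exact h
        · exact absurd (h ▸ h1) h0B
      have hε' : ((0:ℝ) ∉ B ∧ 0 < N ∧ ∃ a ∈ A, a ≤ N) :=
        ⟨h0B, hNpos, M, A.max'_mem hAne, hMN'⟩
      rw [if_pos hε'] at I2
      have hMpos : 0 < M := by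
        have h1 : M ∈ A := A.max'_mem hAne
        have h2 := hA M h1
        rcases h2.lt_or_eq with h | h
        · exact h
        · exact absurd (h ▸ h1) h0A
      have hsε : 1 ≤ (B.filter (fun b => M < b)).card
          + (if ((0:ℝ) ∉ A ∧ 0 < M ∧ ∃ b ∈ B, b ≤ M) then 1 else 0) := by
        by_cases hex : ∃ b ∈ B, b ≤ M
        · rw [if_pos ⟨h0A, hMpos, hex⟩]; omega
        · push_neg at hex
          have : B.filter (fun b => M < b) = B := by
            apply filter_true_of_mem
            intro b hb
            exact hex b hb
          rw [this]
          have := card_pos.mpr hBne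
          omega
      simp only [if_neg h0A]
      refine ⟨by omega, fun hle => ?_⟩
      omega

lemma core (k : ℕ) (hk : 1 ≤ k) (A B D : Finset ℝ)
    (hA : ∀ a ∈ A, (0:ℝ) ≤ a) (hB : ∀ b ∈ B, (0:ℝ) ≤ b)
    (hD : D.card ≤ k)
    (hAA : ∀ a ∈ A, ∀ a' ∈ A, a < a' → 2*(a' - a) ∈ D)
    (hBB : ∀ b ∈ B, ∀ b' ∈ B, b < b' → 2*(b' - b) ∈ D)
    (hAB : ∀ a ∈ A, ∀ b ∈ B, 0 < a + b → 2 * max a b ∈ D)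
    (h0 : (0:ℝ) ∈ A ↔ (0:ℝ) ∈ B) :
    (A.card + B.card ≤ 2*k + 1 + (if (0:ℝ) ∈ A then 1 else 0)) ∧
    (2*k + 1 + (if (0:ℝ) ∈ A then 1 else 0) ≤ A.card + B.card →
      (0:ℝ) ∈ A ∧ (0:ℝ) ∈ B ∧ A.card = k + 1 ∧ B.card = k + 1 ∧
      (∃ δ : ℝ, 0 < δ ∧ ∀ x, x ∈ A ↔ ∃ j : ℕ, j ≤ k ∧ x = j * δ) ∧
      (∃ δ : ℝ, 0 < δ ∧ ∀ x, x ∈ B ↔ ∃ j : ℕ, j ≤ k ∧ x = j * δ)) := by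
  classical
  have hBA : ∀ b ∈ B, ∀ a ∈ A, 0 < b + a → 2 * max b a ∈ D := by
    intro b hb a ha hab
    rw [max_comm]
    exact hAB a ha b hb (by linarith)
  have hite : (if (0:ℝ) ∈ A then 1 else 0) = (if (0:ℝ) ∈ B then 1 else 0) := by
    by_cases h : (0:ℝ) ∈ A
    · rw [if_pos h, if_pos (h0.mp h)]
    · rw [if_neg h, if_neg (fun hb => h (h0.mpr hb))]
  have hswap : (∀ b ∈ B, ∃ a ∈ A, b ≤ a) →
      (A.card + B.card ≤ 2*k + 1 + (if (0:ℝ) ∈ A then 1 else 0)) ∧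
      (2*k + 1 + (if (0:ℝ) ∈ A then 1 else 0) ≤ A.card + B.card →
        (0:ℝ) ∈ A ∧ (0:ℝ) ∈ B ∧ A.card = k + 1 ∧ B.card = k + 1 ∧
        (∃ δ : ℝ, 0 < δ ∧ ∀ x, x ∈ A ↔ ∃ j : ℕ, j ≤ k ∧ x = j * δ) ∧
        (∃ δ : ℝ, 0 < δ ∧ ∀ x, x ∈ B ↔ ∃ j : ℕ, j ≤ k ∧ x = j * δ)) := by
    intro hMN
    obtain ⟨c1, c2⟩ := core_aux k hk B A D hB hA hD hBB hAA hBA h0.symm hMN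
    rw [← hite] at c1 c2
    constructor
    · omega
    · intro hle
      obtain ⟨x1, x2, x3, x4, x5, x6⟩ := c2 (by omega)
      exact ⟨x2, x1, x4, x3, x6, x5⟩
  rcases A.eq_empty_or_nonempty with hAe | hAne
  · exact core_aux k hk A B D hA hB hD hAA hBB hAB h0 (by simp [hAe])
  rcases B.eq_empty_or_nonempty with hBe | hBne
  · exact hswap (by simp [hBe])
  rcases le_total (A.max' hAne) (B.max' hBne) with hle | hle
  · exact core_aux k hk A B D hA hB hD hAA hBB hAB h0
      (fun a ha => ⟨B.max' hBne, B.max'_mem hBne, le_trans (A.le_max' a ha) hle⟩)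
  · exact hswap
      (fun b hb => ⟨A.max' hAne, A.max'_mem hAne, le_trans (B.le_max' b hb) hle⟩)

lemma l1_two (x : Fin 2 → ℝ) : l1 x = |x 0| + |x 1| := by
  simp [l1, Fin.sum_univ_two]

lemma shape_lemma (r : ℝ) (c x : Fin 2 → ℝ)
    (hx : l1 (x - c) = r ∧ c 1 ≤ x 1) :
    x 1 - c 1 = r - |x 0 - c 0| := by
  obtain ⟨hl, hc⟩ := hx
  rw [l1_two] at hl
  have h0 : (x - c) 0 = x 0 - c 0 := rfl
  have h1 : (x - c) 1 = x 1 - c 1 := rfl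
  rw [h0, h1, abs_of_nonneg (by linarith : (0:ℝ) ≤ x 1 - c 1)] at hl
  linarith

lemma inj_lemma (r : ℝ) (c x y : Fin 2 → ℝ)
    (hx : x 1 - c 1 = r - |x 0 - c 0|) (hy : y 1 - c 1 = r - |y 0 - c 0|)
    (h0 : x 0 = y 0) : x = y := by
  have h1 : x 1 = y 1 := by rw [h0] at hx; linarith
  funext i
  fin_cases i <;> assumption

lemma dist_formula (r : ℝ) (c x y : Fin 2 → ℝ)
    (hx : x 1 - c 1 = r - |x 0 - c 0|) (hy : y 1 - c 1 = r - |y 0 - c 0|) :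
    l1 (x - y) = |x 0 - y 0| + |(|y 0 - c 0| - |x 0 - c 0|)| := by
  rw [l1_two]
  have h0 : (x - y) 0 = x 0 - y 0 := rfl
  have h1 : (x - y) 1 = x 1 - y 1 := rfl
  rw [h0, h1]
  have : x 1 - y 1 = |y 0 - c 0| - |x 0 - c 0| := by linarith
  rw [this]

lemma glue (k : ℕ) (hk : 1 ≤ k) (r : ℝ) (hr : 0 < r) (c : Fin 2 → ℝ)
    (S : Set (Fin 2 → ℝ))
    (hS : S ⊆ {x | l1 (x - c) = r ∧ c 1 ≤ x 1})
    (hfin : S.Finite) (D : Finset ℝ) (hD : D.card ≤ k)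
    (hdist : ∀ p ∈ S, ∀ q ∈ S, p ≠ q → l1 (p - q) ∈ D) :
    hfin.toFinset.card ≤ 2*k + 1 ∧
    (2*k + 1 ≤ hfin.toFinset.card →
      (![c 0, c 1 + r]) ∈ S ∧
      (∃ a v : Fin 2 → ℝ, v ≠ 0 ∧
        {x ∈ S | x 0 ≤ c 0} = {x | ∃ j : ℕ, j ≤ k ∧ x = a + (j:ℝ) • v}) ∧
      (∃ a v : Fin 2 → ℝ, v ≠ 0 ∧
        {x ∈ S | c 0 ≤ x 0} = {x | ∃ j : ℕ, j ≤ k ∧ x = a + (j:ℝ) • v})) := by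
  classical
  have hsh : ∀ x ∈ S, x 1 - c 1 = r - |x 0 - c 0| := fun x hx => shape_lemma r c x (hS hx)
  set Sf := hfin.toFinset with hSf
  have hmem : ∀ x, x ∈ Sf ↔ x ∈ S := fun x => hfin.mem_toFinset
  set Lf := Sf.filter (fun x => x 0 ≤ c 0) with hLf
  set Rf := Sf.filter (fun x => c 0 ≤ x 0) with hRf
  set A := Lf.image (fun x => c 0 - x 0) with hA'
  set B := Rf.image (fun x => x 0 - c 0) with hB'
  have hAmem : ∀ a : ℝ, a ∈ A ↔ ∃ x ∈ S, x 0 ≤ c 0 ∧ c 0 - x 0 = a := by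
    intro a
    simp only [hA', hLf, mem_image, mem_filter, hmem]
    constructor
    · rintro ⟨x, ⟨h1, h2⟩, h3⟩; exact ⟨x, h1, h2, h3⟩
    · rintro ⟨x, h1, h2, h3⟩; exact ⟨x, ⟨h1, h2⟩, h3⟩
  have hBmem : ∀ b : ℝ, b ∈ B ↔ ∃ x ∈ S, c 0 ≤ x 0 ∧ x 0 - c 0 = b := by
    intro b
    simp only [hB', hRf, mem_image, mem_filter, hmem]
    constructor
    · rintro ⟨x, ⟨h1, h2⟩, h3⟩; exact ⟨x, h1, h2, h3⟩
    · rintro ⟨x, h1, h2, h3⟩; exact ⟨x, ⟨h1, h2⟩, h3⟩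
  have hA : ∀ a ∈ A, (0:ℝ) ≤ a := by
    intro a ha; obtain ⟨x, -, h2, h3⟩ := (hAmem a).mp ha; linarith
  have hB : ∀ b ∈ B, (0:ℝ) ≤ b := by
    intro b hb; obtain ⟨x, -, h2, h3⟩ := (hBmem b).mp hb; linarith
  have hAA : ∀ a ∈ A, ∀ a' ∈ A, a < a' → 2*(a' - a) ∈ D := by
    intro a ha a' ha' hlt
    obtain ⟨x, hxS, hx0, hxa⟩ := (hAmem a).mp ha
    obtain ⟨y, hyS, hy0, hya⟩ := (hAmem a').mp ha'
    have hxy : x ≠ y := by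
      intro hh; rw [hh] at hxa; rw [hxa] at hya; linarith
    have e2 : |y 0 - c 0| = a' := by rw [abs_of_nonpos] <;> linarith
    have e3 : |x 0 - c 0| = a := by rw [abs_of_nonpos] <;> linarith [hA a ha]
    have hval : l1 (x - y) = 2*(a' - a) := by
      rw [dist_formula r c x y (hsh x hxS) (hsh y hyS), e2, e3,
        abs_of_nonneg (sub_nonneg.mpr hlt.le),
        abs_of_nonneg (by linarith : (0:ℝ) ≤ x 0 - y 0)]
      linarith
    rw [← hval]; exact hdist x hxS y hyS hxy
  have hBB : ∀ b ∈ B, ∀ b' ∈ B, b < b' → 2*(b' - b) ∈ D := by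
    intro b hb b' hb' hlt
    obtain ⟨x, hxS, hx0, hxb⟩ := (hBmem b).mp hb
    obtain ⟨y, hyS, hy0, hyb⟩ := (hBmem b').mp hb'
    have hxy : x ≠ y := by
      intro hh; rw [hh] at hxb; rw [hxb] at hyb; linarith
    have e2 : |y 0 - c 0| = b' := by rw [abs_of_nonneg] <;> linarith
    have e3 : |x 0 - c 0| = b := by rw [abs_of_nonneg] <;> linarith [hB b hb]
    have hval : l1 (x - y) = 2*(b' - b) := by
      rw [dist_formula r c x y (hsh x hxS) (hsh y hyS), e2, e3,
        abs_of_nonneg (sub_nonneg.mpr hlt.le),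
        abs_of_nonpos (by linarith : x 0 - y 0 ≤ (0:ℝ))]
      linarith
    rw [← hval]; exact hdist x hxS y hyS hxy
  have hAB : ∀ a ∈ A, ∀ b ∈ B, 0 < a + b → 2 * max a b ∈ D := by
    intro a ha b hb hab
    obtain ⟨x, hxS, hx0, hxa⟩ := (hAmem a).mp ha
    obtain ⟨y, hyS, hy0, hyb⟩ := (hBmem b).mp hb
    have hxy : x ≠ y := by
      intro hh; rw [hh] at hxa; linarith
    have e2 : |y 0 - c 0| = b := by
      rw [abs_of_nonneg (by linarith : (0:ℝ) ≤ y 0 - c 0)]; linarith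
    have e3 : |x 0 - c 0| = a := by rw [abs_of_nonpos] <;> linarith [hA a ha]
    have e1 : |x 0 - y 0| = a + b := by rw [abs_of_nonpos] <;> linarith [hA a ha, hB b hb]
    have hval : l1 (x - y) = 2 * max a b := by
      rw [dist_formula r c x y (hsh x hxS) (hsh y hyS), e1, e2, e3]
      rcases le_total a b with hh | hh
      · rw [abs_of_nonneg (by linarith), max_eq_right hh]; ring
      · rw [abs_of_nonpos (by linarith), max_eq_left hh]; ring
    rw [← hval]; exact hdist x hxS y hyS hxy
  have h0iff : (0:ℝ) ∈ A ↔ (0:ℝ) ∈ B := by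
    constructor
    · intro hh; obtain ⟨x, hxS, hx0, hxa⟩ := (hAmem 0).mp hh
      exact (hBmem 0).mpr ⟨x, hxS, by linarith, by linarith⟩
    · intro hh; obtain ⟨x, hxS, hx0, hxa⟩ := (hBmem 0).mp hh
      exact (hAmem 0).mpr ⟨x, hxS, by linarith, by linarith⟩
  have hUnion : Lf ∪ Rf = Sf := by
    ext x
    simp only [hLf, hRf, mem_union, mem_filter]
    constructor
    · rintro (⟨hh, -⟩ | ⟨hh, -⟩) <;> exact hh
    · intro hh
      rcases le_total (x 0) (c 0) with h' | h'
      · exact Or.inl ⟨hh, h'⟩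
      · exact Or.inr ⟨hh, h'⟩
  have hInterOne : ∀ x ∈ Lf ∩ Rf, ∀ y ∈ Lf ∩ Rf, x = y := by
    intro x hx y hy
    simp only [mem_inter, hLf, hRf, mem_filter, hmem] at hx hy
    exact inj_lemma r c x y (hsh x hx.1.1) (hsh y hy.1.1)
      (by rw [le_antisymm hx.1.2 hx.2.2, le_antisymm hy.1.2 hy.2.2])
  have hInterCard : (Lf ∩ Rf).card = (if (0:ℝ) ∈ A then 1 else 0) := by
    by_cases h0A : (0:ℝ) ∈ A
    · rw [if_pos h0A]
      obtain ⟨x, hxS, hx0, hxa⟩ := (hAmem 0).mp h0A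
      have hx : x ∈ Lf ∩ Rf := by
        simp only [mem_inter, hLf, hRf, mem_filter, hmem]
        exact ⟨⟨hxS, hx0⟩, ⟨hxS, by linarith⟩⟩
      have heq : Lf ∩ Rf = {x} :=
        Finset.eq_singleton_iff_unique_mem.mpr ⟨hx, fun y hy => hInterOne y hy x hx⟩
      rw [heq, card_singleton]
    · rw [if_neg h0A, card_eq_zero]
      by_contra hne
      obtain ⟨x, hx⟩ := nonempty_of_ne_empty hne
      simp only [mem_inter, hLf, hRf, mem_filter, hmem] at hx
      exact h0A ((hAmem 0).mpr ⟨x, hx.1.1, hx.1.2,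
        by rw [le_antisymm hx.1.2 hx.2.2]; ring⟩)
  have hAcard : A.card = Lf.card := by
    rw [hA']
    apply card_image_of_injOn
    intro x hx y hy hxy
    rw [Finset.mem_coe, hLf, mem_filter, hmem] at hx hy
    exact inj_lemma r c x y (hsh x hx.1) (hsh y hy.1) (by dsimp at hxy; linarith)
  have hBcard : B.card = Rf.card := by
    rw [hB']
    apply card_image_of_injOn
    intro x hx y hy hxy
    rw [Finset.mem_coe, hRf, mem_filter, hmem] at hx hy
    exact inj_lemma r c x y (hsh x hx.1) (hsh y hy.1) (by dsimp at hxy; linarith)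
  have hcards : Sf.card + (Lf ∩ Rf).card = A.card + B.card := by
    rw [hAcard, hBcard, ← hUnion]
    exact card_union_add_card_inter Lf Rf
  obtain ⟨C1, C2⟩ := core k hk A B D hA hB hD hAA hBB hAB h0iff
  have hι : (if (0:ℝ) ∈ A then 1 else 0) ≤ 1 := by split_ifs <;> omega
  refine ⟨by omega, fun hge => ?_⟩
  obtain ⟨h0A, h0B, hAc, hBc, ⟨δ, hδ, hcA⟩, ⟨δ', hδ', hcB⟩⟩ := C2 (by omega)
  -- the vertex
  obtain ⟨w, hwS, hw0, hwa⟩ := (hAmem 0).mp h0A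
  have hw0' : w 0 = c 0 := by linarith
  have hwv : w = ![c 0, c 1 + r] := by
    have h1 := hsh w hwS
    rw [hw0'] at h1
    simp only [sub_self, abs_zero, sub_zero] at h1
    funext i
    fin_cases i
    · simpa using hw0'
    · simpa using (by linarith : w 1 = c 1 + r)
  set av : Fin 2 → ℝ := ![c 0, c 1 + r] with hav
  have hvS : av ∈ S := hwv ▸ hwS
  refine ⟨hvS, ?_, ?_⟩
  · -- left side
    set v : Fin 2 → ℝ := ![-δ, -δ] with hv'
    have hvne : v ≠ 0 := by
      intro hh
      have := congrFun hh 0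
      rw [hv'] at this
      simp at this
      linarith
    have hpt0 : ∀ j : ℕ, (av + (j:ℝ) • v) 0 = c 0 - j * δ := by
      intro j
      simp [hav, hv', Pi.add_apply, Pi.smul_apply, smul_eq_mul]
      ring
    have hpt1 : ∀ j : ℕ, (av + (j:ℝ) • v) 1 = c 1 + (r - j * δ) := by
      intro j
      simp [hav, hv', Pi.add_apply, Pi.smul_apply, smul_eq_mul]
      ring
    have hLrep : ∀ x ∈ S, ∀ j : ℕ, x 0 = c 0 - j * δ → x = av + (j:ℝ) • v := by
      intro x hxS j hx0
      have h1 := hsh x hxS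
      have hjδ : 0 ≤ (j:ℝ) * δ := by positivity
      have habs : |x 0 - c 0| = j * δ := by rw [abs_of_nonpos] <;> linarith
      funext i
      fin_cases i
      · show x 0 = (av + (j:ℝ) • v) 0
        rw [hpt0 j, hx0]
      · show x 1 = (av + (j:ℝ) • v) 1
        rw [hpt1 j]
        rw [habs] at h1
        linarith
    refine ⟨av, v, hvne, ?_⟩
    ext x
    simp only [Set.mem_setOf_eq, Set.mem_sep_iff]
    constructor
    · rintro ⟨hxS, hx0⟩
      have hxA : c 0 - x 0 ∈ A := (hAmem _).mpr ⟨x, hxS, hx0, rfl⟩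
      obtain ⟨j, hj, hjval⟩ := (hcA _).mp hxA
      exact ⟨j, hj, hLrep x hxS j (by linarith)⟩
    · rintro ⟨j, hj, rfl⟩
      have hjA : (j:ℝ) * δ ∈ A := (hcA _).mpr ⟨j, hj, rfl⟩
      obtain ⟨y, hyS, hy0, hya⟩ := (hAmem _).mp hjA
      have hy : y = av + (j:ℝ) • v := hLrep y hyS j (by linarith)
      refine ⟨hy ▸ hyS, ?_⟩
      rw [hpt0 j]
      have : 0 ≤ (j:ℝ) * δ := by positivity
      linarith
  · -- right side
    set v : Fin 2 → ℝ := ![δ', -δ'] with hv'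
    have hvne : v ≠ 0 := by
      intro hh
      have := congrFun hh 0
      rw [hv'] at this
      simp at this
      linarith
    have hpt0 : ∀ j : ℕ, (av + (j:ℝ) • v) 0 = c 0 + j * δ' := by
      intro j
      simp [hav, hv', Pi.add_apply, Pi.smul_apply, smul_eq_mul]
    have hpt1 : ∀ j : ℕ, (av + (j:ℝ) • v) 1 = c 1 + (r - j * δ') := by
      intro j
      simp [hav, hv', Pi.add_apply, Pi.smul_apply, smul_eq_mul]
      ring
    have hRrep : ∀ x ∈ S, ∀ j : ℕ, x 0 = c 0 + j * δ' → x = av + (j:ℝ) • v := by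
      intro x hxS j hx0
      have h1 := hsh x hxS
      have hjδ : 0 ≤ (j:ℝ) * δ' := by positivity
      have habs : |x 0 - c 0| = j * δ' := by rw [abs_of_nonneg] <;> linarith
      funext i
      fin_cases i
      · show x 0 = (av + (j:ℝ) • v) 0
        rw [hpt0 j, hx0]
      · show x 1 = (av + (j:ℝ) • v) 1
        rw [hpt1 j]
        rw [habs] at h1
        linarith
    refine ⟨av, v, hvne, ?_⟩
    ext x
    simp only [Set.mem_setOf_eq, Set.mem_sep_iff]
    constructor
    · rintro ⟨hxS, hx0⟩
      have hxB : x 0 - c 0 ∈ B := (hBmem _).mpr ⟨x, hxS, hx0, rfl⟩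
      obtain ⟨j, hj, hjval⟩ := (hcB _).mp hxB
      exact ⟨j, hj, hRrep x hxS j (by linarith)⟩
    · rintro ⟨j, hj, rfl⟩
      have hjB : (j:ℝ) * δ' ∈ B := (hcB _).mpr ⟨j, hj, rfl⟩
      obtain ⟨y, hyS, hy0, hyb⟩ := (hBmem _).mp hjB
      have hy : y = av + (j:ℝ) • v := hRrep y hyS j (by linarith)
      refine ⟨hy ▸ hyS, ?_⟩
      rw [hpt0 j]
      have : 0 ≤ (j:ℝ) * δ' := by positivity
      linarith

/-- A subset S of a closed upper ℓ1-semicircle of radius r centered at c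
determining at most k distinct ℓ1-distances has |S| ≤ 2k + 1; if |S| = 2k + 1,
then S contains the shared vertex c + (0, r) and the points of S on each of the
two sides form an arithmetic progression of k + 1 points. -/
theorem semicircle_bound (k : ℕ) (hk : 1 ≤ k) (r : ℝ) (hr : 0 < r)
    (c : Fin 2 → ℝ) (S : Set (Fin 2 → ℝ))
    (hS : S ⊆ {x | l1 (x - c) = r ∧ c 1 ≤ x 1})
    (h : DeterminesAtMost k S) :
    S.encard ≤ ((2 * k + 1 : ℕ) : ℕ∞) ∧
    (S.encard = ((2 * k + 1 : ℕ) : ℕ∞) →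
      (![c 0, c 1 + r]) ∈ S ∧
      (∃ a v : Fin 2 → ℝ, v ≠ 0 ∧
        {x ∈ S | x 0 ≤ c 0} = {x | ∃ j : ℕ, j ≤ k ∧ x = a + (j : ℝ) • v}) ∧
      (∃ a v : Fin 2 → ℝ, v ≠ 0 ∧
        {x ∈ S | c 0 ≤ x 0} = {x | ∃ j : ℕ, j ≤ k ∧ x = a + (j : ℝ) • v})) := by
  classical
  have hDfin : (distSet S).Finite := Set.finite_of_encard_le_coe h
  set D := hDfin.toFinset with hD'
  have hDcard : D.card ≤ k := by
    have h5 : (distSet S).encard ≤ (k:ℕ∞) := h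
    have h2 := hDfin.encard_eq_coe_toFinset_card
    rw [h2] at h5
    exact_mod_cast h5
  have hdistD : ∀ p ∈ S, ∀ q ∈ S, p ≠ q → l1 (p - q) ∈ D := by
    intro p hp q hq hpq
    rw [hD', Set.Finite.mem_toFinset]
    exact ⟨p, hp, q, hq, hpq, rfl⟩
  have part1 : S.encard ≤ ((2 * k + 1 : ℕ) : ℕ∞) := by
    by_contra hcon
    push_neg at hcon
    have h2 : ((2*k+2 : ℕ) : ℕ∞) ≤ S.encard := by
      have h3 := Order.add_one_le_of_lt hcon
      calc ((2*k+2 : ℕ) : ℕ∞) = ((2*k+1 : ℕ) : ℕ∞) + 1 := by push_cast; ring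
        _ ≤ S.encard := h3
    obtain ⟨S', hS'sub, hS'card⟩ := Set.exists_subset_encard_eq h2
    have hS'fin : S'.Finite := Set.finite_of_encard_le_coe (le_of_eq hS'card)
    have hS'S : S' ⊆ {x | l1 (x - c) = r ∧ c 1 ≤ x 1} := hS'sub.trans hS
    have hdist' : ∀ p ∈ S', ∀ q ∈ S', p ≠ q → l1 (p - q) ∈ D :=
      fun p hp q hq hpq => hdistD p (hS'sub hp) q (hS'sub hq) hpq
    have hb := (glue k hk r hr c S' hS'S hS'fin D hDcard hdist').1
    have hcard' : hS'fin.toFinset.card = 2*k+2 := by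
      have h4 := hS'fin.encard_eq_coe_toFinset_card
      rw [h4] at hS'card
      exact_mod_cast hS'card
    omega
  refine ⟨part1, fun heq => ?_⟩
  have hfin : S.Finite := Set.finite_of_encard_le_coe (le_of_eq heq)
  have hcard : hfin.toFinset.card = 2*k+1 := by
    have h4 := hfin.encard_eq_coe_toFinset_card
    rw [h4] at heq
    exact_mod_cast heq
  obtain ⟨-, h2⟩ := glue k hk r hr c S hS hfin D hDcard hdistD
  exact h2 (by omega)
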